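/- If a finite simple graph G can be obtained by adding one new edge between two non-adjacent vertices of a graph that is a subdivision of K_{3,3}, then G has a proper K₄-subdivision. -/

import Mathlib

open SimpleGraph

namespace IMWQO

/-- `H` is an induced minor of `G`: there is a family of pairwise disjoint nonempty
connected subsets of `V(G)`, indexed by `V(H)`, such that distinct branch sets are
joined by an edge of `G` iff the corresponding vertices are adjacent in `H`. -/
def IsInducedMinor {α β : Type*} (H : SimpleGraph α) (G : SimpleGraph β) : Prop :=
  ∃ μ : α → Set β,
    (∀ a, (μ a).Nonempty) ∧
    (∀ a b, a ≠ b → Disjoint (μ a) (μ b)) ∧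
    (∀ a, (G.induce (μ a)).Connected) ∧
    (∀ a b, a ≠ b → ((∃ x ∈ μ a, ∃ y ∈ μ b, G.Adj x y) ↔ H.Adj a b))

/-- A bundled finite simple graph. -/
abbrev FinGraph := Σ n : ℕ, SimpleGraph (Fin n)

/-- The induced minor relation on bundled finite graphs. -/
def FinGraph.IM (H G : FinGraph) : Prop := IsInducedMinor H.2 G.2

/-- A class of finite graphs is well-quasi-ordered by the induced minor relation. -/
def WqoClass (P : FinGraph → Prop) : Prop :=
  ∀ f : ℕ → FinGraph, (∀ i, P (f i)) → ∃ i j, i < j ∧ FinGraph.IM (f i) (f j)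

/-- `K̂₄`: `K₄` (on vertices `0,1,2,3`) plus a vertex `4` adjacent to `0` and `1`. -/
def hatK4 : SimpleGraph (Fin 5) :=
  SimpleGraph.fromRel fun a b =>
    (a.val < 4 ∧ b.val < 4) ∨ (a.val = 4 ∧ (b.val = 0 ∨ b.val = 1))

/-- The gem: the path `0 - 1 - 2 - 3` plus a dominating vertex `4`. -/
def gem : SimpleGraph (Fin 5) :=
  SimpleGraph.fromRel fun a b =>
    (b.val = a.val + 1 ∧ b.val ≤ 3) ∨ a.val = 4

/-- The complete graph on four vertices. -/
def K4 : SimpleGraph (Fin 4) := ⊤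

/-- The prism, i.e. the Cartesian (box) product `K₃ □ K₂`. -/
def prism : SimpleGraph (Fin 3 × Fin 2) :=
  (⊤ : SimpleGraph (Fin 3)) □ (⊤ : SimpleGraph (Fin 2))

/-- The complete bipartite graph `K_{3,3}`. -/
def K33 : SimpleGraph (Fin 3 ⊕ Fin 3) := completeBipartiteGraph (Fin 3) (Fin 3)

/-- Subdivide the edge `{u,v}` of `G`, the new vertex being `Fin.last n`. -/
def subdivideEdge {n : ℕ} (G : SimpleGraph (Fin n)) (u v : Fin n) :
    SimpleGraph (Fin (n + 1)) :=
  SimpleGraph.fromRel fun a b =>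
    (∃ a' b' : Fin n, a = a'.castSucc ∧ b = b'.castSucc ∧ G.Adj a' b' ∧
      ¬(a' = u ∧ b' = v) ∧ ¬(a' = v ∧ b' = u))
    ∨ (a = Fin.last n ∧ (b = u.castSucc ∨ b = v.castSucc))

/-- One subdivision step on bundled graphs: the first graph is obtained from the
second one by subdividing one edge. -/
inductive SubdivStep : FinGraph → FinGraph → Prop
  | mk {n : ℕ} (G : SimpleGraph (Fin n)) (u v : Fin n) (h : G.Adj u v) :
      SubdivStep ⟨n + 1, subdivideEdge G u v⟩ ⟨n, G⟩

/-- `G` is (isomorphic to) a subdivision of `H`. -/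
def IsSubdivision {α β : Type*} (G : SimpleGraph α) (H : SimpleGraph β) : Prop :=
  ∃ A B : FinGraph, Nonempty (G ≃g A.2) ∧ Nonempty (H ≃g B.2) ∧
    Relation.ReflTransGen SubdivStep A B

/-- `G` contains a subdivision of `H` as a subgraph. -/
def ContainsSubdivAsSubgraph {α β : Type*} (G : SimpleGraph α) (H : SimpleGraph β) : Prop :=
  ∃ S : G.Subgraph, IsSubdivision S.coe H

/-- `G` has a proper `K₄`-subdivision: for some vertex `v`, `G - v` contains
a subdivision of `K₄` as a subgraph. -/
def HasProperK4Subdivision {α : Type*} (G : SimpleGraph α) : Prop :=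
  ∃ v : α, ContainsSubdivAsSubgraph (G.induce {u | u ≠ v}) K4

/-- `G` is 2-connected: at least 3 vertices, and removing any vertex leaves it connected. -/
def TwoConnected {α : Type*} [Fintype α] (G : SimpleGraph α) : Prop :=
  3 ≤ Fintype.card α ∧ ∀ v : α, (G.induce {u | u ≠ v}).Connected

/-- `G` is complete multipartite: two vertices are adjacent iff they lie in different
classes of some partition (equivalence relation). -/
def IsCompleteMultipartite {α : Type*} (G : SimpleGraph α) : Prop :=
  ∃ s : Setoid α, ∀ u v, G.Adj u v ↔ ¬ s.r u v

/-- `G` is a cograph: it has no induced path on four vertices. -/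
def IsCograph {α : Type*} (G : SimpleGraph α) : Prop :=
  ∀ f : Fin 4 → α, Function.Injective f →
    ¬ (∀ a b : Fin 4, G.Adj (f a) (f b) ↔ (pathGraph 4).Adj a b)

/-- `G` is a linear forest: acyclic with maximum degree at most 2,
i.e. a disjoint union of paths. -/
def IsLinearForest {α : Type*} (G : SimpleGraph α) : Prop :=
  G.IsAcyclic ∧ ∀ v, (G.neighborSet v).ncard ≤ 2

/-- The set `C` induces an (induced) cycle in `G`. -/
def InducesCycle {α : Type*} (G : SimpleGraph α) (C : Set α) : Prop :=
  ∃ n : ℕ, 3 ≤ n ∧ Nonempty ((G.induce C) ≃g cycleGraph n)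

/-- The set `S` induces a path in `G` all of whose internal vertices have degree two
in `G`. -/
def IsBasicPath {α : Type*} (G : SimpleGraph α) (S : Set α) : Prop :=
  ∃ (n : ℕ) (φ : (G.induce S) ≃g pathGraph n),
    ∀ v : S, (φ v).val ≠ 0 → (φ v).val ≠ n - 1 → (G.neighborSet v.val).ncard = 2

/-- The wheel with cycle `0, …, n-1` and center adjacent to the vertices of `T`. -/
def wheelGraph (n : ℕ) (T : Finset (Fin n)) : SimpleGraph (Fin n ⊕ Unit) :=
  SimpleGraph.fromRel fun a b =>
    (∃ x y : Fin n, a = Sum.inl x ∧ b = Sum.inl y ∧ (cycleGraph n).Adj x y)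
    ∨ (∃ x ∈ T, a = Sum.inr () ∧ b = Sum.inl x)

/-- `G` is a `k`-wheel: a cycle of order at least `max k 3` plus a center adjacent to
exactly `k` distinct vertices of the cycle. -/
def IsWheel {α : Type*} (k : ℕ) (G : SimpleGraph α) : Prop :=
  ∃ n : ℕ, 3 ≤ n ∧ k ≤ n ∧ ∃ T : Finset (Fin n), T.card = k ∧
    Nonempty (G ≃g wheelGraph n T)

/-- A 3-wheel subgraph of `G`: a cycle of `G` together with a center outside the cycle
joined to (at least) three distinct vertices of the cycle by edges of `G`. -/
structure ThreeWheelSub {α : Type*} (G : SimpleGraph α) where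
  base : α
  cyc : G.Walk base base
  cyc_isCycle : cyc.IsCycle
  center : α
  center_not_mem : center ∉ cyc.support
  spokes : Finset α
  spokes_card : spokes.card = 3
  spokes_sub : ∀ x ∈ spokes, x ∈ cyc.support
  spokes_adj : ∀ x ∈ spokes, G.Adj center x

/-- The number of vertices of a 3-wheel subgraph. -/
def ThreeWheelSub.order {α : Type*} [DecidableEq α] {G : SimpleGraph α}
    (W : ThreeWheelSub G) : ℕ :=
  W.cyc.support.toFinset.card + 1

/-- `G` has a cycle-multipartite decomposition. -/
def HasCycleMultipartiteDecomp {α : Type*} (G : SimpleGraph α) : Prop :=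
  ∃ C R : Set α, C ∪ R = Set.univ ∧ Disjoint C R ∧
    InducesCycle G C ∧ IsCompleteMultipartite (G.induce R) ∧
    ∀ u ∈ R, ∀ v ∈ R, ∀ c ∈ C, (G.Adj u c ↔ G.Adj v c)

/-- A bundled finite simple graph whose vertices are labeled by finite subsets of `S`. -/
structure LabGraph (S : Type*) where
  n : ℕ
  graph : SimpleGraph (Fin n)
  label : Fin n → Finset S

/-- The domination order on finite subsets of a quasi-order: `A ≤^P B` iff there is an
injection `φ : A → B` with `r a (φ a)` for all `a ∈ A`. -/
def FinsetLE {S : Type*} (r : S → S → Prop) (A B : Finset S) : Prop :=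
  ∃ φ : {x // x ∈ A} → {x // x ∈ B}, Function.Injective φ ∧ ∀ a, r a.val (φ a).val

/-- The union of the labels of the vertices in `A`. -/
noncomputable def labelUnion {S : Type*} {n : ℕ} (lab : Fin n → Finset S)
    (A : Finset (Fin n)) : Finset S :=
  letI := Classical.decEq S
  A.biUnion lab

/-- Label-respecting induced minor relation on labeled graphs. -/
def LabIM {S : Type*} (r : S → S → Prop) (H G : LabGraph S) : Prop :=
  ∃ μ : Fin H.n → Finset (Fin G.n),
    (∀ a, (μ a).Nonempty) ∧
    (∀ a b, a ≠ b → Disjoint (μ a) (μ b)) ∧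
    (∀ a, (G.graph.induce (↑(μ a) : Set (Fin G.n))).Connected) ∧
    (∀ a b, a ≠ b → ((∃ x ∈ μ a, ∃ y ∈ μ b, G.graph.Adj x y) ↔ H.graph.Adj a b)) ∧
    (∀ a, FinsetLE r (H.label a) (labelUnion G.label (μ a)))

/-- Label-respecting contraction relation on labeled graphs: an induced minor model
whose branch sets cover all vertices. -/
def LabContraction {S : Type*} (r : S → S → Prop) (H G : LabGraph S) : Prop :=
  ∃ μ : Fin H.n → Finset (Fin G.n),
    (∀ a, (μ a).Nonempty) ∧
    (∀ a b, a ≠ b → Disjoint (μ a) (μ b)) ∧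
    (∀ x : Fin G.n, ∃ a, x ∈ μ a) ∧
    (∀ a, (G.graph.induce (↑(μ a) : Set (Fin G.n))).Connected) ∧
    (∀ a b, a ≠ b → ((∃ x ∈ μ a, ∃ y ∈ μ b, G.graph.Adj x y) ↔ H.graph.Adj a b)) ∧
    (∀ a, FinsetLE r (H.label a) (labelUnion G.label (μ a)))

/-- Label-respecting induced subgraph relation on labeled graphs. -/
def LabISub {S : Type*} (r : S → S → Prop) (H G : LabGraph S) : Prop :=
  ∃ φ : Fin H.n → Fin G.n, Function.Injective φ ∧
    (∀ a b, H.graph.Adj a b ↔ G.graph.Adj (φ a) (φ b)) ∧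
    (∀ a, FinsetLE r (H.label a) (G.label (φ a)))

/-- A relation is a well-quasi-order: every infinite sequence contains a good pair. -/
def IsWqo {S : Type*} (r : S → S → Prop) : Prop :=
  ∀ g : ℕ → S, ∃ i j, i < j ∧ r (g i) (g j)


/-! ### Auxiliary lemmas -/

/-- Transfer a graph into a subgraph along an injective map that preserves edges. -/
lemma exists_subgraph_of_map {ρ δ : Type*} (R : SimpleGraph ρ) {Q : SimpleGraph δ}
    (f : ρ → δ) (hf : Function.Injective f)
    (h : ∀ a b, R.Adj a b → Q.Adj (f a) (f b)) :
    ∃ S' : Q.Subgraph, Nonempty (S'.coe ≃g R) := by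
  refine ⟨⟨Set.range f, fun a b => ∃ a₀ b₀, R.Adj a₀ b₀ ∧ f a₀ = a ∧ f b₀ = b, ?_, ?_, ?_⟩, ?_⟩
  · rintro a b ⟨a₀, b₀, hab, rfl, rfl⟩; exact h _ _ hab
  · rintro a b ⟨a₀, b₀, hab, rfl, rfl⟩; exact ⟨a₀, rfl⟩
  · constructor; rintro a b ⟨a₀, b₀, hab, rfl, rfl⟩; exact ⟨b₀, a₀, hab.symm, rfl, rfl⟩
  · refine ⟨SimpleGraph.Iso.symm ⟨Equiv.ofBijective (fun z : ρ =>
      (⟨f z, ⟨z, rfl⟩⟩ : ↑(Set.range f))) ⟨?_, ?_⟩, ?_⟩⟩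
    · intro a b hab
      exact hf (congrArg Subtype.val hab)
    · rintro ⟨w, a₀, rfl⟩
      exact ⟨a₀, rfl⟩
    · intro a b
      simp only [SimpleGraph.Subgraph.coe_adj, Equiv.ofBijective_apply]
      constructor
      · rintro ⟨a₀, b₀, hab, ha, hb⟩
        rw [show a₀ = a from hf ha, show b₀ = b from hf hb] at hab
        exact hab
      · intro hab; exact ⟨a, b, hab, rfl, rfl⟩

lemma IsSubdivision.congr_left {γ δ β : Type*} {G : SimpleGraph γ} {G' : SimpleGraph δ}
    {H : SimpleGraph β} (e : G ≃g G') (h : IsSubdivision G H) : IsSubdivision G' H := by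
  obtain ⟨A, B, ⟨φ⟩, hB, hc⟩ := h
  exact ⟨A, B, ⟨e.symm.trans φ⟩, hB, hc⟩

lemma ContainsSubdivAsSubgraph.of_map {γ δ β : Type*} {P : SimpleGraph γ} {Q : SimpleGraph δ}
    {H : SimpleGraph β} (f : γ → δ) (hf : Function.Injective f)
    (hadj : ∀ a b, P.Adj a b → Q.Adj (f a) (f b))
    (h : ContainsSubdivAsSubgraph P H) : ContainsSubdivAsSubgraph Q H := by
  obtain ⟨S, hS⟩ := h
  obtain ⟨S', ⟨e⟩⟩ := exists_subgraph_of_map S.coe (f ∘ Subtype.val)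
    (hf.comp Subtype.val_injective)
    (fun a b hab => hadj _ _ (S.adj_sub (by simpa using hab)))
  exact ⟨S', hS.congr_left e.symm⟩
lemma HasProperK4Subdivision.of_iso {γ δ : Type*} {P : SimpleGraph γ} {Q : SimpleGraph δ}
    (e : P ≃g Q) (h : HasProperK4Subdivision P) : HasProperK4Subdivision Q := by
  obtain ⟨v, hv⟩ := h
  refine ⟨e v, ContainsSubdivAsSubgraph.of_map
    (fun z => ⟨e z.val, fun hc => z.prop (e.injective (hc.trans rfl))⟩) ?_ ?_ hv⟩
  · intro a b hab
    exact Subtype.ext (e.injective (congrArg Subtype.val hab))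
  · intro a b hab
    simpa using e.map_adj_iff.2 (by simpa using hab)

lemma HasProperK4Subdivision.mono {γ : Type*} {P Q : SimpleGraph γ} (hle : P ≤ Q)
    (h : HasProperK4Subdivision P) : HasProperK4Subdivision Q := by
  obtain ⟨v, hv⟩ := h
  refine ⟨v, ContainsSubdivAsSubgraph.of_map id Function.injective_id ?_ hv⟩
  intro a b hab
  simp only [SimpleGraph.comap_adj] at hab ⊢
  exact hle hab
/-- Subdivide the edge `{u,v}` of `G`, the new vertex being `none`. -/
def subdivAux {γ : Type*} (G : SimpleGraph γ) (u v : γ) : SimpleGraph (Option γ) :=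
  SimpleGraph.fromRel fun a b =>
    (∃ a' b' : γ, a = some a' ∧ b = some b' ∧ G.Adj a' b' ∧
      ¬(a' = u ∧ b' = v) ∧ ¬(a' = v ∧ b' = u))
    ∨ (a = none ∧ (b = some u ∨ b = some v))

def subdivAux_congr {γ δ : Type*} {G1 : SimpleGraph γ} {G2 : SimpleGraph δ}
    (f : G1 ≃g G2) (u v : γ) : subdivAux G1 u v ≃g subdivAux G2 (f u) (f v) := by
  refine ⟨f.toEquiv.optionCongr, ?_⟩
  have key : ∀ a b : Option γ,
      ((∃ a' b' : δ, f.toEquiv.optionCongr a = some a' ∧ f.toEquiv.optionCongr b = some b' ∧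
        G2.Adj a' b' ∧ ¬(a' = f u ∧ b' = f v) ∧ ¬(a' = f v ∧ b' = f u))
      ∨ (f.toEquiv.optionCongr a = none ∧
          (f.toEquiv.optionCongr b = some (f u) ∨ f.toEquiv.optionCongr b = some (f v))))
      ↔ ((∃ a' b' : γ, a = some a' ∧ b = some b' ∧ G1.Adj a' b' ∧
        ¬(a' = u ∧ b' = v) ∧ ¬(a' = v ∧ b' = u))
      ∨ (a = none ∧ (b = some u ∨ b = some v))) := by
    intro a b
    cases a <;> cases b <;>
      simp [Equiv.optionCongr, f.map_adj_iff, f.toEquiv.injective.eq_iff, f.injective.eq_iff]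
  intro a b
  simp only [subdivAux, SimpleGraph.fromRel_adj]
  rw [key a b, key b a]
  exact and_congr f.toEquiv.optionCongr.injective.ne_iff Iff.rfl

def subdivAux_iso_subdivideEdge {n : ℕ} (G : SimpleGraph (Fin n)) (u v : Fin n) :
    subdivAux G u v ≃g subdivideEdge G u v := by
  refine ⟨finSuccEquivLast.symm, ?_⟩
  have key : ∀ a b : Option (Fin n),
      ((∃ a' b' : Fin n, finSuccEquivLast.symm a = a'.castSucc ∧
          finSuccEquivLast.symm b = b'.castSucc ∧ G.Adj a' b' ∧
          ¬(a' = u ∧ b' = v) ∧ ¬(a' = v ∧ b' = u))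
        ∨ (finSuccEquivLast.symm a = Fin.last n ∧
          (finSuccEquivLast.symm b = u.castSucc ∨ finSuccEquivLast.symm b = v.castSucc)))
      ↔ ((∃ a' b' : Fin n, a = some a' ∧ b = some b' ∧ G.Adj a' b' ∧
        ¬(a' = u ∧ b' = v) ∧ ¬(a' = v ∧ b' = u))
      ∨ (a = none ∧ (b = some u ∨ b = some v))) := by
    intro a b
    cases a <;> cases b <;>
      simp [finSuccEquivLast_symm_some, finSuccEquivLast_symm_none, Fin.castSucc_inj,
        (Fin.castSucc_lt_last _).ne, (Fin.castSucc_lt_last _).ne', eq_comm (a := Fin.last n)]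
  intro a b
  simp only [subdivAux, subdivideEdge, SimpleGraph.fromRel_adj]
  rw [key a b, key b a]
  exact and_congr finSuccEquivLast.symm.injective.ne_iff Iff.rfl
lemma HasProperK4Subdivision.subdivide {n : ℕ} {A : SimpleGraph (Fin n)} (x y : Fin n)
    (h : HasProperK4Subdivision A) : HasProperK4Subdivision (subdivideEdge A x y) := by
  classical
  obtain ⟨v, S, hS⟩ := h
  have hlast : (Fin.last n : Fin (n + 1)) ∈ {u : Fin (n+1) | u ≠ v.castSucc} :=
    (Fin.castSucc_lt_last v).ne'
  have liftmem : ∀ w : ↑{u : Fin n | u ≠ v},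
      (w : Fin n).castSucc ∈ {u : Fin (n+1) | u ≠ v.castSucc} :=
    fun w hc => w.prop (Fin.castSucc_inj.mp hc)
  set lift : ↑{u : Fin n | u ≠ v} → ↑{u : Fin (n+1) | u ≠ v.castSucc} :=
    fun w => ⟨(w : Fin n).castSucc, liftmem w⟩ with hlift
  have liftinj : Function.Injective lift := by
    intro a b hab
    exact Subtype.ext (Fin.castSucc_inj.mp (congrArg Subtype.val hab))
  by_cases hedge : ∃ (hx : x ≠ v) (hy : y ≠ v), S.Adj ⟨x, hx⟩ ⟨y, hy⟩
  · -- the subdivided edge is an edge of `S` : replace it by the path through the new vertex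
    obtain ⟨hx, hy, hSxy⟩ := hedge
    have hx' : (⟨x, hx⟩ : {u : Fin n | u ≠ v}) ∈ S.verts := S.edge_vert hSxy
    have hy' : (⟨y, hy⟩ : {u : Fin n | u ≠ v}) ∈ S.verts := S.edge_vert hSxy.symm
    obtain ⟨⟨m, C⟩, B0, ⟨φ⟩, κ, chain⟩ := hS
    set px : ↑S.verts := ⟨⟨x, hx⟩, hx'⟩ with hpx
    set py : ↑S.verts := ⟨⟨y, hy⟩, hy'⟩ with hpy
    set g : Option ↑S.verts → ↑{u : Fin (n+1) | u ≠ v.castSucc} :=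
      fun p => p.elim ⟨Fin.last n, hlast⟩ (fun a => lift a.val) with hg
    have hginj : Function.Injective g := by
      rintro (_ | a) (_ | b) hab
      · rfl
      · exact absurd (congrArg Subtype.val hab) (Fin.castSucc_lt_last _).ne'
      · exact absurd (congrArg Subtype.val hab) (Fin.castSucc_lt_last _).ne
      · exact congrArg some (Subtype.ext (liftinj hab))
    have hgadj : ∀ p q, (subdivAux S.coe px py).Adj p q →
        ((subdivideEdge A x y).induce {u : Fin (n+1) | u ≠ v.castSucc}).Adj (g p) (g q) := by
      rintro (_ | a) (_ | b) hpq <;>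
        simp only [subdivAux, SimpleGraph.fromRel_adj, SimpleGraph.Subgraph.coe_adj] at hpq
      · simp at hpq
      · -- none, some b : new vertex to an end of the subdivided edge
        have hb : b = px ∨ b = py := by
          obtain ⟨-, h1 | h2⟩ := hpq
          · rcases h1 with ⟨a', b', h, _⟩ | ⟨-, h | h⟩ <;> simp_all
          · rcases h2 with ⟨a', b', _, h, _⟩ | ⟨h, -⟩ <;> simp_all
        show (subdivideEdge A x y).Adj (Fin.last n) (lift b.val).val
        rw [subdivideEdge, SimpleGraph.fromRel_adj]
        refine ⟨(Fin.castSucc_lt_last _).ne', Or.inl (Or.inr ⟨rfl, ?_⟩)⟩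
        rcases hb with rfl | rfl
        · exact Or.inl rfl
        · exact Or.inr rfl
      · -- some a, none
        have ha : a = px ∨ a = py := by
          obtain ⟨-, h1 | h2⟩ := hpq
          · rcases h1 with ⟨a', b', _, h, _⟩ | ⟨h, -⟩ <;> simp_all
          · rcases h2 with ⟨a', b', h, _⟩ | ⟨-, h | h⟩ <;> simp_all
        show (subdivideEdge A x y).Adj (lift a.val).val (Fin.last n)
        rw [subdivideEdge, SimpleGraph.fromRel_adj]
        refine ⟨(Fin.castSucc_lt_last _).ne, Or.inr (Or.inr ⟨rfl, ?_⟩)⟩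
        rcases ha with rfl | rfl
        · exact Or.inl rfl
        · exact Or.inr rfl
      · -- some a, some b
        obtain ⟨hne, h1 | h2⟩ := hpq
        · rcases h1 with ⟨a', b', ha', hb', hadj, hn1, hn2⟩ | ⟨h, -⟩
          · rw [Option.some.inj ha', Option.some.inj hb'] at hne ⊢
            show (subdivideEdge A x y).Adj (lift a'.val).val (lift b'.val).val
            rw [subdivideEdge, SimpleGraph.fromRel_adj]
            refine ⟨fun hc => hne (congrArg some (Subtype.ext (Subtype.ext
                (Fin.castSucc_inj.mp hc)))), Or.inl (Or.inl
              ⟨a'.val.val, b'.val.val, rfl, rfl, by have := S.adj_sub (by simpa using hadj); simpa using this, ?_, ?_⟩)⟩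
            · rintro ⟨h1, h2⟩
              exact hn1 ⟨Subtype.ext (Subtype.ext h1), Subtype.ext (Subtype.ext h2)⟩
            · rintro ⟨h1, h2⟩
              exact hn2 ⟨Subtype.ext (Subtype.ext h1), Subtype.ext (Subtype.ext h2)⟩
          · simp at h
        · rcases h2 with ⟨a', b', ha', hb', hadj, hn1, hn2⟩ | ⟨h, -⟩
          · rw [Option.some.inj ha', Option.some.inj hb'] at hne ⊢
            show (subdivideEdge A x y).Adj (lift b'.val).val (lift a'.val).val
            rw [subdivideEdge, SimpleGraph.fromRel_adj]
            refine ⟨fun hc => hne (congrArg some (Subtype.ext (Subtype.ext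
                (Fin.castSucc_inj.mp hc)))), Or.inr (Or.inl
              ⟨a'.val.val, b'.val.val, rfl, rfl, by have := S.adj_sub (by simpa using hadj); simpa using this, ?_, ?_⟩)⟩
            · rintro ⟨h1, h2⟩
              exact hn1 ⟨Subtype.ext (Subtype.ext h1), Subtype.ext (Subtype.ext h2)⟩
            · rintro ⟨h1, h2⟩
              exact hn2 ⟨Subtype.ext (Subtype.ext h1), Subtype.ext (Subtype.ext h2)⟩
          · simp at h
    obtain ⟨S', ⟨e⟩⟩ := exists_subgraph_of_map (subdivAux S.coe px py) g hginj hgadj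
    refine ⟨v.castSucc, S', ?_⟩
    have hCadj : C.Adj (φ px) (φ py) := φ.map_adj_iff.2 (by simpa using hSxy)
    exact ⟨⟨m + 1, subdivideEdge C (φ px) (φ py)⟩, B0,
      ⟨e.trans ((subdivAux_congr φ px py).trans
        (subdivAux_iso_subdivideEdge C (φ px) (φ py)))⟩, κ,
      Relation.ReflTransGen.head (SubdivStep.mk C (φ px) (φ py) hCadj) chain⟩
  · -- the subdivided edge is not an edge of `S`
    have hgadj : ∀ a b, S.coe.Adj a b →
        ((subdivideEdge A x y).induce {u : Fin (n+1) | u ≠ v.castSucc}).Adj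
          (lift a.val) (lift b.val) := by
      intro a b hab
      have hA : A.Adj a.val.val b.val.val := by
        have := S.adj_sub (by simpa using hab)
        simpa using this
      show (subdivideEdge A x y).Adj (lift a.val).val (lift b.val).val
      rw [subdivideEdge, SimpleGraph.fromRel_adj]
      refine ⟨fun hc => hA.ne (Fin.castSucc_inj.mp hc), Or.inl (Or.inl
        ⟨a.val.val, b.val.val, rfl, rfl, hA, ?_, ?_⟩)⟩
      · rintro ⟨h1, h2⟩
        refine hedge ⟨h1 ▸ a.val.prop, h2 ▸ b.val.prop, ?_⟩
        have ea : (⟨x, h1 ▸ a.val.prop⟩ : {u : Fin n | u ≠ v}) = a.val := Subtype.ext h1.symm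
        have eb : (⟨y, h2 ▸ b.val.prop⟩ : {u : Fin n | u ≠ v}) = b.val := Subtype.ext h2.symm
        rw [ea, eb]
        simpa using hab
      · rintro ⟨h1, h2⟩
        refine hedge ⟨h2 ▸ b.val.prop, h1 ▸ a.val.prop, ?_⟩
        have ea : (⟨y, h1 ▸ a.val.prop⟩ : {u : Fin n | u ≠ v}) = a.val := Subtype.ext h1.symm
        have eb : (⟨x, h2 ▸ b.val.prop⟩ : {u : Fin n | u ≠ v}) = b.val := Subtype.ext h2.symm
        rw [ea, eb]
        exact (by simpa using hab : S.Adj a.val b.val).symm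
    obtain ⟨S', ⟨e⟩⟩ := exists_subgraph_of_map S.coe (fun z : ↑S.verts => lift z.val)
      (fun a b hab => Subtype.ext (liftinj hab)) hgadj
    exact ⟨v.castSucc, S', hS.congr_left e.symm⟩
/-! ### Decidability instances -/

instance : DecidableRel K4.Adj := fun a b => decidable_of_iff _ (SimpleGraph.top_adj (v := a) (w := b)).symm

instance : DecidableRel K33.Adj := fun a b =>
  decidable_of_iff (a.isLeft ∧ b.isRight ∨ a.isRight ∧ b.isLeft) Iff.rfl

instance {n : ℕ} {G : SimpleGraph (Fin n)} [DecidableRel G.Adj] {u v : Fin n} :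
    DecidableRel (subdivideEdge G u v).Adj := fun a b =>
  decidable_of_iff _ (SimpleGraph.fromRel_adj _ a b).symm

/-! ### The concrete base graphs -/

/-- `K33` with vertices `0,1,2` on the left and `3,4,5` on the right. -/
def C6 : SimpleGraph (Fin 6) :=
  SimpleGraph.fromRel fun a b => a.val < 3 ∧ 3 ≤ b.val

instance : DecidableRel C6.Adj := fun a b =>
  decidable_of_iff _ (SimpleGraph.fromRel_adj _ a b).symm

def isoC6 : K33 ≃g C6 := by
  refine ⟨finSumFinEquiv, ?_⟩
  intro a b
  revert a b
  decide

lemma isoC6_inl : isoC6 (Sum.inl 0) = 0 := by decide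
lemma isoC6_inr : isoC6 (Sum.inr 0) = 3 := by decide
/-- The concrete `K₄`-subdivision used for the base case: `K₄` with the edges
`{0,1}` and `{2,3}` subdivided. -/
def E6 : SimpleGraph (Fin 6) := subdivideEdge (subdivideEdge K4 0 1) 2 3

instance : DecidableRel E6.Adj := fun a b =>
  inferInstanceAs (Decidable ((subdivideEdge (subdivideEdge K4 0 1) 2 3).Adj a b))

instance : DecidableRel ((subdivideEdge C6 0 3).induce {w : Fin 7 | w ≠ Fin.last 6}).Adj :=
  fun a b => decidable_of_iff ((subdivideEdge C6 0 3).Adj a.val b.val) Iff.rfl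

/-- The embedding of the vertices of `E6` used in `concrete2`. -/
def f6 : Fin 6 → ↑{w : Fin 7 | w ≠ Fin.last 6} :=
  fun i => ⟨![1, 2, 4, 5, 3, 0] i, by revert i; decide⟩

lemma f6_inj : Function.Injective f6 := by decide

lemma f6_adj' : ∀ a b, E6.Adj a b →
    (subdivideEdge C6 0 3).Adj (f6 a).val (f6 b).val := by decide

lemma f6_adj : ∀ a b, E6.Adj a b →
    ((subdivideEdge C6 0 3).induce {w : Fin 7 | w ≠ Fin.last 6}).Adj (f6 a) (f6 b) :=
  fun a b hab => f6_adj' a b hab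

lemma concrete2 : HasProperK4Subdivision (subdivideEdge C6 0 3) := by
  obtain ⟨S', ⟨e⟩⟩ := exists_subgraph_of_map E6 f6 f6_inj f6_adj
  refine ⟨Fin.last 6, S', ⟨6, E6⟩, ⟨4, K4⟩, ⟨e⟩, ⟨SimpleGraph.Iso.refl⟩, ?_⟩
  exact Relation.ReflTransGen.head (SubdivStep.mk (subdivideEdge K4 0 1) 2 3 (by decide))
    (Relation.ReflTransGen.single (SubdivStep.mk K4 0 1 (by decide)))

/-- An automorphism of `K33` from a pair of permutations of the parts. -/
def sumCongrIso (e1 e2 : Fin 3 ≃ Fin 3) : K33 ≃g K33 := by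
  refine ⟨Equiv.sumCongr e1 e2, ?_⟩
  intro a b
  cases a <;> cases b <;> simp [K33, completeBipartiteGraph]

/-- The automorphism of `K33` swapping the two parts. -/
def commIso : K33 ≃g K33 := by
  refine ⟨Equiv.sumComm (Fin 3) (Fin 3), ?_⟩
  intro a b
  cases a <;> cases b <;> simp [K33, completeBipartiteGraph]

/-- Base case: subdividing one edge of (a graph isomorphic to) `K33` yields a graph
with a proper `K₄`-subdivision. -/
lemma base2 {n : ℕ} {Gg : SimpleGraph (Fin n)} (ψ : K33 ≃g Gg) {x y : Fin n}
    (hxy : Gg.Adj x y) : HasProperK4Subdivision (subdivideEdge Gg x y) := by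
  have hxy' : K33.Adj (ψ.symm x) (ψ.symm y) := by
    rw [ψ.symm.map_adj_iff]; simpa using hxy
  -- find an isomorphism `K33 ≃g Gg` sending `inl 0` to `x` and `inr 0` to `y`
  obtain ⟨χ, hχ1, hχ2⟩ : ∃ χ : K33 ≃g K33, χ (Sum.inl 0) = ψ.symm x ∧
      χ (Sum.inr 0) = ψ.symm y := by
    rcases hi : ψ.symm x with i | i <;> rcases hj : ψ.symm y with j | j <;>
      rw [hi, hj] at hxy'
    · simp [K33, completeBipartiteGraph] at hxy'
    · exact ⟨sumCongrIso (Equiv.swap 0 i) (Equiv.swap 0 j),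
        congrArg Sum.inl (Equiv.swap_apply_left 0 i),
        congrArg Sum.inr (Equiv.swap_apply_left 0 j)⟩
    · exact ⟨(sumCongrIso (Equiv.swap 0 i) (Equiv.swap 0 j)).trans commIso,
        congrArg Sum.inr (Equiv.swap_apply_left 0 i),
        congrArg Sum.inl (Equiv.swap_apply_left 0 j)⟩
    · simp [K33, completeBipartiteGraph] at hxy'
  have hex : (χ.trans ψ) (Sum.inl 0) = x := by
    show ψ (χ (Sum.inl 0)) = x
    rw [hχ1]; exact ψ.toEquiv.apply_symm_apply x
  have hey : (χ.trans ψ) (Sum.inr 0) = y := by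
    show ψ (χ (Sum.inr 0)) = y
    rw [hχ2]; exact ψ.toEquiv.apply_symm_apply y
  have h0 : (isoC6.symm.trans (χ.trans ψ)) 0 = x := by
    show (χ.trans ψ) (isoC6.symm 0) = x
    have h : isoC6.symm (0 : Fin 6) = Sum.inl 0 := by
      rw [← isoC6_inl]; exact isoC6.symm_apply_apply _
    rw [h, hex]
  have h3 : (isoC6.symm.trans (χ.trans ψ)) 3 = y := by
    show (χ.trans ψ) (isoC6.symm 3) = y
    have h : isoC6.symm (3 : Fin 6) = Sum.inr 0 := by
      rw [← isoC6_inr]; exact isoC6.symm_apply_apply _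
    rw [h, hey]
  have iso2 : subdivAux C6 0 3 ≃g subdivAux Gg x y :=
    h0 ▸ h3 ▸ subdivAux_congr (isoC6.symm.trans (χ.trans ψ)) 0 3
  have isoFinal : subdivideEdge C6 0 3 ≃g subdivideEdge Gg x y :=
    ((subdivAux_iso_subdivideEdge C6 0 3).symm.trans iso2).trans
      (subdivAux_iso_subdivideEdge Gg x y)
  exact concrete2.of_iso isoFinal
/-- `K33` together with the extra edge `{inl 0, inl 1}`. -/
def Q1 : SimpleGraph (Fin 3 ⊕ Fin 3) :=
  K33 ⊔ SimpleGraph.fromEdgeSet {s(Sum.inl 0, Sum.inl 1)}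

lemma Q1_adj (a b : Fin 3 ⊕ Fin 3) :
    Q1.Adj a b ↔ K33.Adj a b ∨ (s(a, b) = s(Sum.inl 0, Sum.inl 1) ∧ a ≠ b) := by
  simp [Q1, SimpleGraph.fromEdgeSet_adj]

instance : DecidableRel Q1.Adj := fun a b => decidable_of_iff _ (Q1_adj a b).symm

instance : DecidableRel (Q1.induce {w : Fin 3 ⊕ Fin 3 | w ≠ Sum.inr 2}).Adj :=
  fun a b => decidable_of_iff (Q1.Adj a.val b.val) Iff.rfl

/-- The concrete `K₄`-subdivision used for the other base case. -/
def D5 : SimpleGraph (Fin 5) := subdivideEdge K4 2 3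

instance : DecidableRel D5.Adj := fun a b =>
  inferInstanceAs (Decidable ((subdivideEdge K4 2 3).Adj a b))

def f5 : Fin 5 → ↑{w : Fin 3 ⊕ Fin 3 | w ≠ Sum.inr 2} :=
  fun i => ⟨![Sum.inl 0, Sum.inl 1, Sum.inr 0, Sum.inr 1, Sum.inl 2] i, by revert i; decide⟩

lemma f5_inj : Function.Injective f5 := by decide

lemma f5_adj' : ∀ a b, D5.Adj a b → Q1.Adj (f5 a).val (f5 b).val := by decide

lemma concrete1 : HasProperK4Subdivision Q1 := by
  obtain ⟨S', ⟨e⟩⟩ := exists_subgraph_of_map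
    (Q := Q1.induce {w : Fin 3 ⊕ Fin 3 | w ≠ Sum.inr 2}) D5 f5 f5_inj
    (fun a b hab => f5_adj' a b hab)
  exact ⟨Sum.inr 2, S', ⟨5, D5⟩, ⟨4, K4⟩, ⟨e⟩, ⟨SimpleGraph.Iso.refl⟩,
    Relation.ReflTransGen.single (SubdivStep.mk K4 2 3 (by decide))⟩

lemma chainProper {C B : FinGraph} (chain : Relation.ReflTransGen SubdivStep C B)
    (eB : K33 ≃g B.2) : ∀ {A : FinGraph}, SubdivStep A C → HasProperK4Subdivision A.2 := by
  induction chain using Relation.ReflTransGen.head_induction_on with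
  | refl =>
    intro A hstep
    cases hstep with
    | mk G u v h => exact base2 eB h
  | head h' chain' ih =>
    intro A hstep
    cases hstep with
    | mk G u v h => exact HasProperK4Subdivision.subdivide u v (ih h')
/-- Adding an edge to a subdivision of `K_{3,3}` creates a proper `K₄`-subdivision. -/
theorem K33_subdivision_plus_edge {α : Type*} (G H : SimpleGraph α) (u v : α)
    (hsub : IsSubdivision H K33) (hne : u ≠ v) (hnadj : ¬ H.Adj u v)
    (hG : G = H ⊔ SimpleGraph.fromEdgeSet {s(u, v)}) :
    HasProperK4Subdivision G := by
  subst hG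
  obtain ⟨A, B, ⟨eA⟩, ⟨eB⟩, chain⟩ := hsub
  rcases chain.cases_head with heq | ⟨C, hstep, chain'⟩
  · -- `H` is isomorphic to `K33` itself : use the extra edge
    subst heq
    have eH : H ≃g K33 := eA.trans eB.symm
    have hnadj' : ¬ K33.Adj (eH u) (eH v) := fun hc => hnadj (eH.map_adj_iff.mp hc)
    have hne' : eH u ≠ eH v := fun hc => hne (eH.injective hc)
    obtain ⟨χ, hχ1, hχ2⟩ : ∃ χ : K33 ≃g K33, χ (eH u) = Sum.inl 0 ∧ χ (eH v) = Sum.inl 1 := by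
      rcases hi : eH u with i | i <;> rcases hj : eH v with j | j <;>
        rw [hi, hj] at hnadj' hne'
      · have hij : i ≠ j := fun hc => hne' (congrArg Sum.inl hc)
        have hj0 : (Equiv.swap i 0) j ≠ 0 := fun hc =>
          hij ((Equiv.swap i 0).injective (hc.trans (Equiv.swap_apply_left i 0).symm)).symm
        refine ⟨sumCongrIso ((Equiv.swap i 0).trans (Equiv.swap ((Equiv.swap i 0) j) 1))
          (Equiv.refl _), congrArg Sum.inl ?_, congrArg Sum.inl ?_⟩
        · show (Equiv.swap ((Equiv.swap i 0) j) 1) ((Equiv.swap i 0) i) = 0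
          rw [Equiv.swap_apply_left]
          exact Equiv.swap_apply_of_ne_of_ne (Ne.symm hj0) (by decide)
        · show (Equiv.swap ((Equiv.swap i 0) j) 1) ((Equiv.swap i 0) j) = 1
          exact Equiv.swap_apply_left _ 1
      · exact absurd (by simp [K33, completeBipartiteGraph]) hnadj'
      · exact absurd (by simp [K33, completeBipartiteGraph]) hnadj'
      · have hij : i ≠ j := fun hc => hne' (congrArg Sum.inr hc)
        have hj0 : (Equiv.swap i 0) j ≠ 0 := fun hc =>
          hij ((Equiv.swap i 0).injective (hc.trans (Equiv.swap_apply_left i 0).symm)).symm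
        refine ⟨(sumCongrIso (Equiv.refl _)
          ((Equiv.swap i 0).trans (Equiv.swap ((Equiv.swap i 0) j) 1))).trans commIso,
          congrArg Sum.inl ?_, congrArg Sum.inl ?_⟩
        · show (Equiv.swap ((Equiv.swap i 0) j) 1) ((Equiv.swap i 0) i) = 0
          rw [Equiv.swap_apply_left]
          exact Equiv.swap_apply_of_ne_of_ne (Ne.symm hj0) (by decide)
        · show (Equiv.swap ((Equiv.swap i 0) j) 1) ((Equiv.swap i 0) j) = 1
          exact Equiv.swap_apply_left _ 1
    set e' : H ≃g K33 := eH.trans χ with he'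
    have hu : e' u = Sum.inl 0 := hχ1
    have hv : e' v = Sum.inl 1 := hχ2
    have isoG : (H ⊔ SimpleGraph.fromEdgeSet {s(u, v)}) ≃g Q1 := by
      refine ⟨e'.toEquiv, ?_⟩
      intro a b
      show Q1.Adj (e' a) (e' b) ↔ (H ⊔ SimpleGraph.fromEdgeSet {s(u, v)}).Adj a b
      rw [Q1_adj, SimpleGraph.sup_adj, SimpleGraph.fromEdgeSet_adj, Set.mem_singleton_iff]
      refine or_congr e'.map_adj_iff (and_congr ?_ e'.injective.ne_iff)
      rw [← hu, ← hv, ← Sym2.map_pair_eq e', ← Sym2.map_pair_eq e',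
        (Sym2.map.injective e'.injective).eq_iff]
    exact concrete1.of_iso isoG.symm
  · exact ((chainProper chain' eB hstep).of_iso eA.symm).mono le_sup_left

end IMWQO
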